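/- arXiv:0906.1962 — 6 statements merged into one kernel-verified Lean document; each statement's English description precedes it below -/
import Mathlib

section
/- Assume the symmetrized Schlesinger equations L_m B_n = Σ_{k=1}^{n-1}[B_k, B_{m+n-k}] + n B_{m+n} hold with B_0 = 0, where each L_m is a derivation commuting with trace. Define Ĥ_n := -(1/4) Σ_{k=0}^n tr(B_k B_{n-k}). Then L_m Ĥ_n = -(1/2) Σ_{k=1}^{n-1} k · tr(B_{m+k} B_{n-k}) for all m ≥ -1, n ≥ 0. -/
/-!
Differentiating `Ĥ_n` by the Leibniz rule gives `Σ_k tr(L B_k · B_{n-k} + B_k · L B_{n-k})`,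
and reflecting `k ↦ n - k` together with `tr(XY) = tr(YX)` turns this into
`2 Σ_k tr(L B_k · B_{n-k})`.
Inserting the Schlesinger equations, the term `k B_{m+k}` produces the right-hand side, while the
commutator terms cancel: `tr([B_a, B_b] B_c)` with `a + b + c` fixed is antisymmetric under
`a ↔ c` by cyclicity of the trace, and the range of summation is symmetric under that exchange.
-/

open Finset Matrix

theorem Int.sum_Icc_zero_reflect {M : Type*} [AddCommMonoid M] (f : ℤ → M) (n : ℤ) :
    ∑ k ∈ Icc 0 n, f (n - k) = ∑ k ∈ Icc 0 n, f k :=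
  sum_nbij' (n - ·) (n - ·) (fun k hk => by simp only [mem_Icc] at hk ⊢; omega)
    (fun k hk => by simp only [mem_Icc] at hk ⊢; omega) (fun k _ => by simp) (fun k _ => by simp)
    (fun k _ => rfl)

theorem Int.sum_Icc_zero_eq_sum_Icc_one_sub_one {M : Type*} [AddCommMonoid M] {f : ℤ → M}
    {n : ℤ} (h₀ : f 0 = 0) (hn : f n = 0) :
    ∑ k ∈ Icc 0 n, f k = ∑ k ∈ Icc 1 (n - 1), f k := by
  refine (sum_subset (fun k hk => by simp only [mem_Icc] at hk ⊢; omega) fun k hk hk' => ?_).symm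
  simp only [mem_Icc] at hk hk'
  obtain rfl | rfl : k = 0 ∨ k = n := by omega
  exacts [h₀, hn]

section Schlesinger

variable {ι R : Type*} [Fintype ι] [CommRing R]

theorem Matrix.sum_trace_commutator_mul_eq_zero (A : ℤ → Matrix ι ι R) (m n : ℤ) :
    ∑ k ∈ Icc 1 (n - 1), ∑ j ∈ Icc 1 (k - 1),
      ((A j * A (m + k - j) - A (m + k - j) * A j) * A (n - k)).trace = 0 := by
  have hswap :
      ∑ k ∈ Icc 1 (n - 1), ∑ j ∈ Icc 1 (k - 1), (A (m + k - j) * A j * A (n - k)).trace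
        = ∑ k ∈ Icc 1 (n - 1), ∑ j ∈ Icc 1 (k - 1), (A j * A (m + k - j) * A (n - k)).trace := by
    rw [sum_sigma', sum_sigma']
    -- in the variables `a = j`, `c = n - k` this is the exchange `a ↔ c`, fixing `b = m + k - j`
    refine sum_nbij' (fun p => ⟨n - p.2, n - p.1⟩) (fun p => ⟨n - p.2, n - p.1⟩)
      ?_ ?_ ?_ ?_ ?_
    · rintro ⟨k, j⟩ h
      simp only [mem_sigma, mem_Icc] at h ⊢
      omega
    · rintro ⟨k, j⟩ h
      simp only [mem_sigma, mem_Icc] at h ⊢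
      omega
    · rintro ⟨k, j⟩ -
      simp
    · rintro ⟨k, j⟩ -
      simp
    · rintro ⟨k, j⟩ -
      dsimp only
      rw [trace_mul_cycle, show m + (n - j) - (n - k) = m + k - j by ring, sub_sub_cancel]
  simp only [sub_mul, trace_sub, sum_sub_distrib, hswap, sub_self]

theorem Matrix.sum_trace_mul_add_trace_mul_of_schlesinger {A D : ℤ → Matrix ι ι R} {m : ℤ}
    (hA0 : A 0 = 0) (hD0 : D 0 = 0) (hD : ∀ k, 1 ≤ k → D k = ∑ j ∈ Icc 1 (k - 1),
      (A j * A (m + k - j) - A (m + k - j) * A j) + (k : R) • A (m + k)) (n : ℤ) :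
    ∑ k ∈ Icc 0 n, ((D k * A (n - k)).trace + (A k * D (n - k)).trace)
      = 2 * ∑ k ∈ Icc 1 (n - 1), (k : R) * (A (m + k) * A (n - k)).trace := by
  have hsymm :
      ∑ k ∈ Icc 0 n, (A k * D (n - k)).trace = ∑ k ∈ Icc 0 n, (D k * A (n - k)).trace := by
    rw [← Int.sum_Icc_zero_reflect]
    simp only [sub_sub_cancel, trace_mul_comm (A _)]
  have hends : ∑ k ∈ Icc 0 n, (D k * A (n - k)).trace
      = ∑ k ∈ Icc 1 (n - 1), (D k * A (n - k)).trace :=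
    Int.sum_Icc_zero_eq_sum_Icc_one_sub_one (by simp [hD0]) (by simp [hA0])
  have hexpand : ∑ k ∈ Icc 1 (n - 1), (D k * A (n - k)).trace
      = ∑ k ∈ Icc 1 (n - 1), ∑ j ∈ Icc 1 (k - 1),
          ((A j * A (m + k - j) - A (m + k - j) * A j) * A (n - k)).trace
        + ∑ k ∈ Icc 1 (n - 1), (k : R) * (A (m + k) * A (n - k)).trace := by
    rw [← sum_add_distrib]
    refine sum_congr rfl fun k hk => ?_
    rw [hD k (mem_Icc.1 hk).1, add_mul, trace_add, sum_mul, trace_sum, smul_mul_assoc,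
      trace_smul, smul_eq_mul]
  rw [sum_add_distrib, hsymm, hends, hexpand, sum_trace_commutator_mul_eq_zero, zero_add, two_mul]

theorem LinearMap.map_trace_sum_mul {X κ : Type*}
    {L : (X → Matrix ι ι R) →ₗ[R] (X → Matrix ι ι R)} {Ls : (X → R) →ₗ[R] (X → R)}
    (hLeib : ∀ F G, L (F * G) = L F * G + F * L G)
    (hTr : ∀ F, Ls (fun x => (F x).trace) = fun x => (L F x).trace)
    (c : R) (s : Finset κ) (F G : κ → X → Matrix ι ι R) :
    Ls (fun x => c * ∑ i ∈ s, (F i x * G i x).trace)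
      = fun x => c * ∑ i ∈ s, ((L (F i) x * G i x).trace + (F i x * L (G i) x).trace) := by
  have : (fun x => c * ∑ i ∈ s, (F i x * G i x).trace)
      = c • ∑ i ∈ s, fun x => ((F i * G i) x).trace := by
    ext x
    simp
  simp_rw [this, map_smul, map_sum, hTr, hLeib]
  ext x
  simp [Finset.sum_apply, trace_add]

end Schlesinger

/-- Under the symmetrized Schlesinger equations `L_m B_n = ∑_{k=1}^{n-1}[B_k,B_{m+n-k}] + n B_{m+n}`
with `B_0 = 0`, where each `L_m` is a derivation commuting with the trace, the modified
Hamiltonians `Ĥ_n := -(1/4) ∑_{k=0}^n tr(B_k B_{n-k})` satisfy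
`L_m Ĥ_n = -(1/2) ∑_{k=1}^{n-1} k tr(B_{m+k} B_{n-k})` for all `m ≥ -1`, `n ≥ 0`. -/
theorem L_on_modified_hamiltonians {X : Type*} (M : ℕ)
    (B : ℤ → X → Matrix (Fin M) (Fin M) ℂ) (hB0 : B 0 = 0)
    (Lm : ℤ → (X → Matrix (Fin M) (Fin M) ℂ) →ₗ[ℂ] (X → Matrix (Fin M) (Fin M) ℂ))
    (Ls : ℤ → (X → ℂ) →ₗ[ℂ] (X → ℂ))
    (hLeib : ∀ m : ℤ, -1 ≤ m → ∀ F G : X → Matrix (Fin M) (Fin M) ℂ,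
      Lm m (F * G) = Lm m F * G + F * Lm m G)
    (hTr : ∀ m : ℤ, -1 ≤ m → ∀ F : X → Matrix (Fin M) (Fin M) ℂ,
      Ls m (fun x => (F x).trace) = fun x => ((Lm m F) x).trace)
    (hSch : ∀ m n : ℤ, -1 ≤ m → 1 ≤ n →
      Lm m (B n) = (∑ k ∈ Finset.Icc 1 (n - 1),
          (B k * B (m + n - k) - B (m + n - k) * B k)) + (n : ℂ) • B (m + n))
    (H : ℤ → X → ℂ)
    (hH : ∀ n, H n = fun x => -(1/4 : ℂ) * ∑ k ∈ Finset.Icc 0 n, (B k x * B (n - k) x).trace) :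
    ∀ m n : ℤ, -1 ≤ m → 0 ≤ n →
      Ls m (H n) =
        fun x => -(1/2 : ℂ) * ∑ k ∈ Finset.Icc 1 (n - 1),
          (k : ℂ) * (B (m + k) x * B (n - k) x).trace := by
  intro m n hm _
  rw [hH, LinearMap.map_trace_sum_mul (hLeib m hm) (hTr m hm)]
  ext x
  have hSchx : ∀ k, 1 ≤ k → Lm m (B k) x = ∑ j ∈ Icc 1 (k - 1),
      (B j x * B (m + k - j) x - B (m + k - j) x * B j x) + (k : ℂ) • B (m + k) x := by
    intro k hk
    simp [hSch m k hm hk, Finset.sum_apply]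
  rw [sum_trace_mul_add_trace_mul_of_schlesinger (A := fun k => B k x) (congrFun hB0 x)
    (by simp [hB0]) hSchx]
  ring
end

section
/- Under the hypotheses of the symmetrized Schlesinger system (L_m B_n = Σ_{k=1}^{n-1}[B_k,B_{m+n-k}] + n B_{m+n}, B_0 = 0), the modified Hamiltonians Ĥ_n := -(1/4) Σ_{k=0}^n tr(B_k B_{n-k}) satisfy L_m Ĥ_n - L_n Ĥ_m = (n-m) Ĥ_{m+n} for all m, n ≥ -1. -/
/-
By the Leibniz rule and the reflection `k ↦ n - k`,
`L_m Ĥ_n = -(1/2) ∑_{k=1}^{n-1} tr(L_m B_k · B_{n-k})`. Inserting the Schlesinger equation, the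
commutator terms cancel in pairs under `(k, j) ↦ (n - j, n - k)` by cyclicity of the trace, so
`L_m Ĥ_n = -(1/2) ∑_{k=1}^{n-1} k tr(B_{m+k} B_{n-k})`. Re-indexing `L_m Ĥ_n - L_n Ĥ_m` by the
first factor `j` of `tr(B_j B_{m+n-j})` gives the weight `j - m` on all of `0..m+n`, and averaging
with the reflection `j ↦ m + n - j` turns it into `(n - m)/2`.
-/

open Finset Matrix

namespace Int

theorem sum_Icc_reflect {M : Type*} [AddCommMonoid M] (f : ℤ → M) (a b : ℤ) :
    ∑ k ∈ Icc a b, f (a + b - k) = ∑ k ∈ Icc a b, f k :=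
  sum_nbij' (fun k => a + b - k) (fun k => a + b - k)
    (fun k hk => by simp only [mem_Icc] at hk ⊢; omega)
    (fun k hk => by simp only [mem_Icc] at hk ⊢; omega)
    (fun k _ => sub_sub_cancel _ _) (fun k _ => sub_sub_cancel _ _) (fun _ _ => rfl)

theorem sum_Icc_add_left {M : Type*} [AddCommMonoid M] (f : ℤ → M) (a b c : ℤ) :
    ∑ k ∈ Icc a b, f (c + k) = ∑ k ∈ Icc (c + a) (c + b), f k := by
  rw [← map_add_left_Icc, sum_map]
  rfl

end Int

section

variable {R ι : Type*} [CommRing R] [Fintype ι]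

theorem sum_sum_trace_commutator_mul_eq_zero (b : ℤ → Matrix ι ι R) (m n : ℤ) :
    ∑ k ∈ Icc 1 (n - 1), ∑ j ∈ Icc 1 (k - 1),
      ((b j * b (m + k - j) - b (m + k - j) * b j) * b (n - k)).trace = 0 := by
  set S := (Icc 1 (n - 1)).sigma fun k => Icc 1 (k - 1)
  set T : (_ : ℤ) × ℤ → R := fun p => (b p.2 * b (m + p.1 - p.2) * b (n - p.1)).trace
  -- `(k, j) ↦ (n - j, n - k)` exchanges the two halves of the commutator terms, up to
  -- cyclicity of the trace
  have hswap : ∑ p ∈ S, T ⟨n - p.2, n - p.1⟩ = ∑ p ∈ S, T p :=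
    sum_nbij' (fun p => ⟨n - p.2, n - p.1⟩) (fun p => ⟨n - p.2, n - p.1⟩)
      (fun p hp => by simp only [S, mem_sigma, mem_Icc] at hp ⊢; omega)
      (fun p hp => by simp only [S, mem_sigma, mem_Icc] at hp ⊢; omega)
      (fun p _ => by simp) (fun p _ => by simp) (fun _ _ => rfl)
  rw [sum_sigma', ← sub_eq_zero_of_eq hswap.symm, ← sum_sub_distrib]
  refine sum_congr rfl fun p _ => ?_
  simp only [T, sub_sub_cancel, sub_mul, trace_sub]
  rw [show m + (n - p.2) - (n - p.1) = m + p.1 - p.2 by ring, trace_mul_cycle (b (m + p.1 - p.2))]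

theorem sum_trace_mul_add_mul_eq_two_mul (b c : ℤ → Matrix ι ι R) (n : ℤ) :
    ∑ k ∈ Icc 0 n, (c k * b (n - k) + b k * c (n - k)).trace
      = 2 * ∑ k ∈ Icc 0 n, (c k * b (n - k)).trace := by
  rw [two_mul]
  nth_rw 2 [← Int.sum_Icc_reflect]
  rw [← sum_add_distrib]
  refine sum_congr rfl fun k _ => ?_
  rw [trace_add, zero_add, sub_sub_cancel, trace_mul_comm (b k), add_comm]

theorem sum_trace_mul_add_mul_of_schlesinger {b c : ℤ → Matrix ι ι R} {m : ℤ} (hb0 : b 0 = 0)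
    (hc0 : c 0 = 0) (hc : ∀ k, 1 ≤ k → c k = ∑ j ∈ Icc 1 (k - 1),
      (b j * b (m + k - j) - b (m + k - j) * b j) + (k : R) • b (m + k)) (n : ℤ) :
    ∑ k ∈ Icc 0 n, (c k * b (n - k) + b k * c (n - k)).trace
      = 2 * ∑ k ∈ Icc 1 (n - 1), (k : R) * (b (m + k) * b (n - k)).trace := by
  have hends : ∑ k ∈ Icc 1 (n - 1), (c k * b (n - k)).trace
      = ∑ k ∈ Icc 0 n, (c k * b (n - k)).trace := by
    refine sum_subset (Icc_subset_Icc zero_le_one (by omega)) fun k hk hk' => ?_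
    simp only [mem_Icc] at hk hk'
    obtain rfl | rfl : k = 0 ∨ k = n := by omega
    · rw [hc0, zero_mul, trace_zero]
    · rw [sub_self, hb0, mul_zero, trace_zero]
  have hexpand : ∀ k ∈ Icc 1 (n - 1), (c k * b (n - k)).trace
      = ∑ j ∈ Icc 1 (k - 1), ((b j * b (m + k - j) - b (m + k - j) * b j) * b (n - k)).trace
        + (k : R) * (b (m + k) * b (n - k)).trace := fun k hk => by
    rw [hc k (mem_Icc.1 hk).1, add_mul, trace_add, sum_mul, trace_sum, smul_mul_assoc,
      trace_smul, smul_eq_mul]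
  rw [sum_trace_mul_add_mul_eq_two_mul, ← hends, sum_congr rfl hexpand, sum_add_distrib,
    sum_sum_trace_commutator_mul_eq_zero, zero_add]

theorem map_sum_trace_mul {X : Type*} (D : (X → Matrix ι ι R) →ₗ[R] (X → Matrix ι ι R))
    (d : (X → R) →ₗ[R] (X → R)) (hD : ∀ F G, D (F * G) = D F * G + F * D G)
    (hd : ∀ F, d (fun x => (F x).trace) = fun x => (D F x).trace)
    (b : ℤ → X → Matrix ι ι R) (n : ℤ) :
    d (fun x => ∑ k ∈ Icc 0 n, (b k x * b (n - k) x).trace)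
      = fun x => ∑ k ∈ Icc 0 n, (D (b k) x * b (n - k) x + b k x * D (b (n - k)) x).trace := by
  have hsum : (fun x => ∑ k ∈ Icc 0 n, (b k x * b (n - k) x).trace)
      = ∑ k ∈ Icc 0 n, fun x => ((b k * b (n - k)) x).trace := by
    funext x
    simp only [Finset.sum_apply, Pi.mul_apply]
  rw [hsum, map_sum]
  funext x
  rw [Finset.sum_apply]
  refine sum_congr rfl fun k _ => ?_
  rw [hd, hD]
  rfl

theorem two_mul_weighted_sum_Icc_sub {f : ℤ → ℤ → R} (hsymm : ∀ a b, f a b = f b a)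
    (hf0 : ∀ b, f 0 b = 0) {m n : ℤ} (hm : -1 ≤ m) (hn : -1 ≤ n) :
    2 * (∑ k ∈ Icc 1 (n - 1), (k : R) * f (m + k) (n - k)
      - ∑ k ∈ Icc 1 (m - 1), (k : R) * f (n + k) (m - k))
      = (n - m : R) * ∑ k ∈ Icc 0 (m + n), f k (m + n - k) := by
  set g : ℤ → R := fun j => f j (m + n - j)
  have hA : ∑ k ∈ Icc 1 (n - 1), (k : R) * f (m + k) (n - k)
      = ∑ j ∈ Icc (m + 1) (m + n - 1), (j - m : R) * g j := by
    rw [show m + n - 1 = m + (n - 1) by ring, ← Int.sum_Icc_add_left]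
    refine sum_congr rfl fun k _ => ?_
    simp only [g]
    push_cast
    ring_nf
  have hB : ∑ k ∈ Icc 1 (m - 1), (k : R) * f (n + k) (m - k)
      = -∑ j ∈ Icc 1 (m - 1), (j - m : R) * g j := by
    rw [← Int.sum_Icc_reflect, ← sum_neg_distrib]
    refine sum_congr rfl fun k _ => ?_
    simp only [g]
    rw [hsymm]
    push_cast
    ring_nf
  have hsplit : ∑ j ∈ Icc (m + 1) (m + n - 1), (j - m : R) * g j
      + ∑ j ∈ Icc 1 (m - 1), (j - m : R) * g j = ∑ j ∈ Icc 0 (m + n), (j - m : R) * g j := by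
    rw [← sum_union (disjoint_left.2 fun j h1 h2 => by simp only [mem_Icc] at h1 h2; omega)]
    refine sum_subset (fun j hj => by simp only [mem_union, mem_Icc] at hj ⊢; omega)
      fun j hj hj' => ?_
    simp only [mem_union, mem_Icc] at hj hj'
    obtain rfl | rfl | rfl : j = 0 ∨ j = m ∨ j = m + n := by omega
    · simp [g, hf0]
    · simp
    · simp [g, hsymm _ 0, hf0]
  have hreflect : ∑ j ∈ Icc 0 (m + n), (j - m : R) * g j
      = ∑ j ∈ Icc 0 (m + n), (n - j : R) * g j := by
    rw [← Int.sum_Icc_reflect]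
    refine sum_congr rfl fun j _ => ?_
    simp only [g]
    rw [hsymm]
    push_cast
    ring_nf
  rw [hA, hB, sub_neg_eq_add, hsplit, two_mul]
  nth_rw 2 [hreflect]
  rw [mul_sum, ← sum_add_distrib]
  exact sum_congr rfl fun j _ => by ring

end

/-- Under the symmetrized Schlesinger system with `B_0 = 0`, the modified Hamiltonians
`Ĥ_n := -(1/4) ∑_{k=0}^n tr(B_k B_{n-k})` satisfy
`L_m Ĥ_n - L_n Ĥ_m = (n - m) Ĥ_{m+n}` for all `m, n ≥ -1`. -/
theorem hamiltonian_commutation {X : Type*} (M : ℕ)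
    (B : ℤ → X → Matrix (Fin M) (Fin M) ℂ) (hB0 : B 0 = 0)
    (Lm : ℤ → (X → Matrix (Fin M) (Fin M) ℂ) →ₗ[ℂ] (X → Matrix (Fin M) (Fin M) ℂ))
    (Ls : ℤ → (X → ℂ) →ₗ[ℂ] (X → ℂ))
    (hLeib : ∀ m : ℤ, -1 ≤ m → ∀ F G : X → Matrix (Fin M) (Fin M) ℂ,
      Lm m (F * G) = Lm m F * G + F * Lm m G)
    (hTr : ∀ m : ℤ, -1 ≤ m → ∀ F : X → Matrix (Fin M) (Fin M) ℂ,
      Ls m (fun x => (F x).trace) = fun x => ((Lm m F) x).trace)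
    (hSch : ∀ m n : ℤ, -1 ≤ m → 1 ≤ n →
      Lm m (B n) = (∑ k ∈ Finset.Icc 1 (n - 1),
          (B k * B (m + n - k) - B (m + n - k) * B k)) + (n : ℂ) • B (m + n))
    (H : ℤ → X → ℂ)
    (hH : ∀ n, H n = fun x => -(1/4 : ℂ) * ∑ k ∈ Finset.Icc 0 n, (B k x * B (n - k) x).trace) :
    ∀ m n : ℤ, -1 ≤ m → -1 ≤ n →
      Ls m (H n) - Ls n (H m) = ((n - m : ℤ) : ℂ) • H (m + n) := by
  have hLsH : ∀ m n : ℤ, -1 ≤ m → Ls m (H n) = fun x =>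
      -(1 / 2 : ℂ) * ∑ k ∈ Icc 1 (n - 1), (k : ℂ) * (B (m + k) x * B (n - k) x).trace := by
    intro m n hm
    rw [hH, show (fun x => -(1 / 4 : ℂ) * ∑ k ∈ Icc 0 n, (B k x * B (n - k) x).trace)
        = -(1 / 4 : ℂ) • fun x => ∑ k ∈ Icc 0 n, (B k x * B (n - k) x).trace from rfl,
      map_smul, map_sum_trace_mul _ _ (hLeib m hm) (hTr m hm)]
    funext x
    have hderiv := sum_trace_mul_add_mul_of_schlesinger (m := m) (b := fun k => B k x)
      (c := fun k => Lm m (B k) x) (congrFun hB0 x) (by simp only [hB0, map_zero]; rfl)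
      (fun k hk => by
        simp only [hSch m k hm hk, Pi.add_apply, Finset.sum_apply, Pi.sub_apply, Pi.mul_apply,
          Pi.smul_apply]) n
    rw [Pi.smul_apply, smul_eq_mul, hderiv]
    ring
  intro m n hm hn
  rw [hLsH m n hm, hLsH n m hn, hH (m + n)]
  funext x
  have hcomb := two_mul_weighted_sum_Icc_sub (f := fun a b => (B a x * B b x).trace)
    (fun a b => trace_mul_comm _ _) (fun b => by simp [hB0]) hm hn
  simp only [Pi.sub_apply, Pi.smul_apply, smul_eq_mul]
  push_cast
  linear_combination (-(1 / 4 : ℂ)) * hcomb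
end

section
/- Under the hypotheses of the symmetrized Schlesinger system with B_0 = 0, the traces satisfy the inversion formula tr(B_m B_n) = 4 L_m Ĥ_n - 2( L_{m-1} Ĥ_{n+1} + L_{m+1} Ĥ_{n-1} ) for all m, n ≥ 1. -/
/-!
With `τ` the pointwise trace and `B_0 = 0`, `Ĥ_q = -¼ τ(Σ_{k=1}^{q-1} B_k B_{q-k})`. The reflection
`k ↦ q - k` and `τ(xy) = τ(yx)` give `L_p Ĥ_q = -½ Σ_k τ((L_p B_k) B_{q-k})`. Inserting the
Schlesinger equation, the commutators contribute `τ(B_j B_a B_l) - τ(B_l B_a B_j)` with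
`a = p + q - j - l`, which cancels under `j ↔ l`; hence
`L_p Ĥ_q = -½ Σ_{k=1}^{q-1} k τ(B_{p+k} B_{q-k})`. In
`4 L_m Ĥ_n - 2 (L_{m-1} Ĥ_{n+1} + L_{m+1} Ĥ_{n-1})` the weight of `τ(B_{m+k} B_{n-k})` is
`-2k + (k+1) + (k-1) = 0` for `k ≥ 1`, and only the `k = 0` term `τ(B_m B_n)` survives.
-/

open Finset Matrix

theorem sum_Icc_reflect {S : Type*} [AddCommMonoid S] (f : ℤ → S) (a b : ℤ) :
    ∑ k ∈ Icc a b, f k = ∑ k ∈ Icc a b, f (a + b - k) := by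
  refine sum_nbij' (fun k => a + b - k) (fun k => a + b - k) ?_ ?_ ?_ ?_ ?_ <;>
    intro k hk <;> simp only [mem_Icc] at * <;> first | omega | simp

theorem sum_Icc_shift {S : Type*} [AddCommMonoid S] (f : ℤ → S) (a b c : ℤ) :
    ∑ k ∈ Icc (a + c) (b + c), f k = ∑ k ∈ Icc a b, f (k + c) := by
  rw [← map_add_right_Icc, sum_map]
  rfl

theorem sum_Icc_sum_Icc_sub_swap {S : Type*} [AddCommGroup S] (f : ℤ → ℤ → S) (q : ℤ) :
    ∑ k ∈ Icc 1 (q - 1), ∑ j ∈ Icc 1 (q - k - 1), (f j k - f k j) = 0 := by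
  simp only [sum_sub_distrib, sub_eq_zero]
  refine sum_comm' fun k j => ?_
  simp only [mem_Icc]
  omega

theorem sum_Icc_zero_mul_eq_sum_Icc_one {A : Type*} [NonUnitalNonAssocSemiring A] (b : ℤ → A)
    (hb0 : b 0 = 0) (q : ℤ) :
    ∑ k ∈ Icc 0 q, b k * b (q - k) = ∑ k ∈ Icc 1 (q - 1), b k * b (q - k) := by
  refine (sum_subset (fun k hk => ?_) fun k hk hk' => ?_).symm
  · simp only [mem_Icc] at *
    omega
  · simp only [mem_Icc] at hk hk'
    obtain rfl | rfl : k = 0 ∨ k = q := by omega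
    all_goals simp [hb0]

noncomputable def shiftedMoment {S : Type*} [AddCommGroup S] (T : ℤ → ℤ → S) (p q : ℤ) : S :=
  ∑ k ∈ Icc 1 (q - 1), k • T (p + k) (q - k)

theorem shiftedMoment_second_difference {S : Type*} [AddCommGroup S] (T : ℤ → ℤ → S) (m n : ℤ)
    (hn : 1 ≤ n) :
    shiftedMoment T (m - 1) (n + 1) + shiftedMoment T (m + 1) (n - 1) - 2 • shiftedMoment T m n
      = T m n := by
  have h_lower : shiftedMoment T (m - 1) (n + 1)
      = T m n + ∑ k ∈ Icc 1 (n - 1), (k + 1) • T (m + k) (n - k) := by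
    have hIcc : Icc (0 : ℤ) (n - 1) = insert 0 (Icc 1 (n - 1)) := by
      ext k; simp only [mem_Icc, mem_insert]; omega
    rw [shiftedMoment, show Icc (1 : ℤ) (n + 1 - 1) = Icc (0 + 1) (n - 1 + 1) by ring_nf,
      sum_Icc_shift, hIcc, sum_insert (by simp)]
    simp only [one_smul, zero_add, sub_add_cancel, add_sub_cancel_right]
    exact congrArg _ (sum_congr rfl fun k _ => by ring_nf)
  have h_upper : shiftedMoment T (m + 1) (n - 1)
      = ∑ k ∈ Icc 1 (n - 1), (k - 1) • T (m + k) (n - k) := by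
    have h_drop : ∑ k ∈ Icc 2 (n - 1), (k - 1) • T (m + k) (n - k)
        = ∑ k ∈ Icc 1 (n - 1), (k - 1) • T (m + k) (n - k) := by
      refine sum_subset (fun k hk => ?_) fun k hk hk' => ?_
      · simp only [mem_Icc] at *
        omega
      · simp only [mem_Icc] at hk hk'
        simp [show k = 1 by omega]
    rw [← h_drop, show Icc (2 : ℤ) (n - 1) = Icc (1 + 1) (n - 1 - 1 + 1) by norm_num,
      sum_Icc_shift, shiftedMoment]
    exact sum_congr rfl fun k _ => by ring_nf
  have h_sum : ∑ k ∈ Icc 1 (n - 1), (k + 1) • T (m + k) (n - k)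
      + ∑ k ∈ Icc 1 (n - 1), (k - 1) • T (m + k) (n - k)
      = 2 • shiftedMoment T m n := by
    rw [shiftedMoment, smul_sum, ← sum_add_distrib]
    exact sum_congr rfl fun k _ => by module
  rw [h_lower, h_upper, ← h_sum]
  abel

section TraceLike

variable {A S F : Type*} [Ring A] [AddCommGroup S] [FunLike F A S] [AddMonoidHomClass F A S]

theorem sum_map_mul_add_mul_reflect (τ : F) (hτ : ∀ a b, τ (a * b) = τ (b * a)) (d b : ℤ → A)
    (q : ℤ) :
    ∑ k ∈ Icc 1 (q - 1), τ (d k * b (q - k) + b k * d (q - k))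
      = 2 • ∑ k ∈ Icc 1 (q - 1), τ (d k * b (q - k)) := by
  rw [two_smul, ← sum_add_distrib]
  simp only [map_add, sum_add_distrib, add_right_inj]
  rw [sum_Icc_reflect]
  refine sum_congr rfl fun k _ => ?_
  rw [hτ, show 1 + (q - 1) - k = q - k by ring, sub_sub_cancel]

theorem sum_map_commutator_sum_mul_eq_zero (τ : F) (hτ : ∀ a b, τ (a * b) = τ (b * a))
    (b : ℤ → A) (p q : ℤ) :
    ∑ k ∈ Icc 1 (q - 1),
      τ ((∑ j ∈ Icc 1 (k - 1), (b j * b (p + k - j) - b (p + k - j) * b j)) * b (q - k)) = 0 := by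
  rw [sum_Icc_reflect,
    ← sum_Icc_sum_Icc_sub_swap (fun j k => τ (b j * b (p + q - (j + k)) * b k)) q]
  refine sum_congr rfl fun k _ => ?_
  have e : 1 + (q - 1) - k = q - k := by ring
  simp only [e, sub_sub_cancel, sum_mul, map_sum, sub_mul, map_sub]
  refine sum_congr rfl fun j _ => ?_
  rw [show p + (q - k) - j = p + q - (j + k) by ring, add_comm k j,
    hτ (b (p + q - (j + k)) * b j), ← mul_assoc]

end TraceLike

theorem map_sum_mul_deriv_eq_two_smul_shiftedMoment {R A S F G : Type*} [CommRing R] [Ring A]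
    [Algebra R A] [AddCommGroup S] [Module R S] [FunLike F A S] [LinearMapClass F R A S]
    [FunLike G A A] [AddMonoidHomClass G A A]
    (τ : F) (hτ : ∀ a b, τ (a * b) = τ (b * a))
    (L : G) (hL : ∀ a b, L (a * b) = L a * b + a * L b) (b : ℤ → A) (p q : ℤ)
    (hLb : ∀ n, 1 ≤ n → L (b n) =
      (∑ k ∈ Icc 1 (n - 1), (b k * b (p + n - k) - b (p + n - k) * b k)) + (n : R) • b (p + n)) :
    τ (L (∑ k ∈ Icc 1 (q - 1), b k * b (q - k)))
      = 2 • shiftedMoment (fun i j => τ (b i * b j)) p q := by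
  have h_term : ∀ k ∈ Icc 1 (q - 1), τ (L (b k) * b (q - k))
      = τ ((∑ j ∈ Icc 1 (k - 1), (b j * b (p + k - j) - b (p + k - j) * b j)) * b (q - k))
        + k • τ (b (p + k) * b (q - k)) := fun k hk => by
    rw [hLb k (mem_Icc.1 hk).1, add_mul, map_add, smul_mul_assoc, map_smul, Int.cast_smul_eq_zsmul]
  calc τ (L (∑ k ∈ Icc 1 (q - 1), b k * b (q - k)))
      = ∑ k ∈ Icc 1 (q - 1), τ (L (b k) * b (q - k) + b k * L (b (q - k))) := by
        simp only [map_sum, hL]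
    _ = 2 • ∑ k ∈ Icc 1 (q - 1), τ (L (b k) * b (q - k)) :=
        sum_map_mul_add_mul_reflect τ hτ (fun k => L (b k)) b q
    _ = 2 • shiftedMoment (fun i j => τ (b i * b j)) p q := by
        rw [sum_congr rfl h_term, sum_add_distrib, sum_map_commutator_sum_mul_eq_zero τ hτ b p q,
          zero_add, shiftedMoment]

/-- Under the symmetrized Schlesinger system with `B_0 = 0`, the traces satisfy the inversion
formula `tr(B_m B_n) = 4 L_m Ĥ_n - 2 (L_{m-1} Ĥ_{n+1} + L_{m+1} Ĥ_{n-1})` for all `m, n ≥ 1`. -/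
theorem trace_inversion_formula {X : Type*} (M : ℕ)
    (B : ℤ → X → Matrix (Fin M) (Fin M) ℂ) (hB0 : B 0 = 0)
    (Lm : ℤ → (X → Matrix (Fin M) (Fin M) ℂ) →ₗ[ℂ] (X → Matrix (Fin M) (Fin M) ℂ))
    (Ls : ℤ → (X → ℂ) →ₗ[ℂ] (X → ℂ))
    (hLeib : ∀ m : ℤ, -1 ≤ m → ∀ F G : X → Matrix (Fin M) (Fin M) ℂ,
      Lm m (F * G) = Lm m F * G + F * Lm m G)
    (hTr : ∀ m : ℤ, -1 ≤ m → ∀ F : X → Matrix (Fin M) (Fin M) ℂ,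
      Ls m (fun x => (F x).trace) = fun x => ((Lm m F) x).trace)
    (hSch : ∀ m n : ℤ, -1 ≤ m → 1 ≤ n →
      Lm m (B n) = (∑ k ∈ Finset.Icc 1 (n - 1),
          (B k * B (m + n - k) - B (m + n - k) * B k)) + (n : ℂ) • B (m + n))
    (H : ℤ → X → ℂ)
    (hH : ∀ n, H n = fun x => -(1/4 : ℂ) * ∑ k ∈ Finset.Icc 0 n, (B k x * B (n - k) x).trace) :
    ∀ m n : ℤ, 1 ≤ m → 1 ≤ n →
      (fun x => (B m x * B n x).trace) =
        (4 : ℂ) • Ls m (H n) - (2 : ℂ) • (Ls (m - 1) (H (n + 1)) + Ls (m + 1) (H (n - 1))) := by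
  set τ := (traceLinearMap (Fin M) ℂ ℂ).compLeft X
  have hτ : ∀ F G, τ (F * G) = τ (G * F) := fun F G => funext fun x => trace_mul_comm (F x) (G x)
  have hLH : ∀ p q, -1 ≤ p →
      Ls p (H q) = (-(1 / 2) : ℂ) • shiftedMoment (fun i j => τ (B i * B j)) p q := by
    intro p q hp
    have hHq : H q = (-(1 / 4) : ℂ) • τ (∑ k ∈ Icc 1 (q - 1), B k * B (q - k)) := by
      rw [← sum_Icc_zero_mul_eq_sum_Icc_one B hB0, hH]
      funext x
      simp [τ]
    rw [hHq, map_smul, show Ls p (τ _) = τ (Lm p _) from hTr p hp _,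
      map_sum_mul_deriv_eq_two_smul_shiftedMoment τ hτ (Lm p) (hLeib p hp) B p q
        fun n hn => hSch p n hp hn]
    module
  intro m n hm hn
  change τ (B m * B n) = _
  rw [hLH m n (by omega), hLH (m - 1) (n + 1) (by omega), hLH (m + 1) (n - 1) (by omega)]
  linear_combination (norm := module)
    -shiftedMoment_second_difference (fun i j => τ (B i * B j)) m n hn
end

section
/- Under the hypotheses of the symmetrized Schlesinger system with B_0 = 0, for any k < m < n the triple trace satisfies: tr(B_k [B_m, B_n]) = Σ_{j=m}^{n-1} ( L_k tr(B_j B_{m+n-j}) - (1/2) L_{k-1} tr(B_{j+1} B_{m+n-j}) - (1/2) L_{k+1} tr(B_j B_{m+n-1-j}) ) + tr(B_n B_{k+m}) - tr(B_m B_{k+n}). -/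
/-!
By the Leibniz rule and the Schlesinger equations, `L_s tr(B_a B_b)` is
`tr(D_s(a) B_b) + tr(D_s(b) B_a)`, where `D_s(a) = ∑_{i=1}^{a-1} [B_i, B_{s+a-i}] + a B_{s+a}`.
The right-hand sides satisfy `D_{s-1}(a+1) = D_s(a) + [B_a, B_s] + B_{s+a}`, and with this
shift rule and the cyclic identity `tr([A,C] B) = -tr([B,C] A)` each doubled summand
`2 L_k tr(B_j B_{N-j}) - L_{k-1} tr(B_{j+1} B_{N-j}) - L_{k+1} tr(B_j B_{N-1-j})`, `N = m + n`,
becomes a difference `Φ(j) - Φ(j+1)` of the explicit potential `Φ = tracePotential`.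
The sum telescopes to `Φ(m) - Φ(n)`, which is `2 tr(B_k [B_m, B_n])` up to pair traces.
Pointwise in `x` all of this is an identity about a sequence of matrices over a commutative ring.
-/

open Matrix Finset

namespace Schlesinger

theorem Icc_eq_insert_sub_one {a b : ℤ} (h : a ≤ b) : Icc a b = insert b (Icc a (b - 1)) := by
  ext i; simp only [mem_Icc, mem_insert]; omega

theorem sum_Icc_sub_add_one {G : Type*} [AddCommGroup G] (f : ℤ → G) {m n : ℤ} (h : m ≤ n) :
    ∑ j ∈ Icc m (n - 1), (f j - f (j + 1)) = f m - f n := by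
  induction n, h using Int.leInduction with
  | base => simp
  | succ n hmn ih =>
    rw [add_sub_cancel_right, Icc_eq_insert_sub_one hmn, sum_insert (by simp), ih]
    abel

variable {ι R : Type*} [Fintype ι] [CommRing R] (β : ℤ → Matrix ι ι R)

theorem trace_commutator_mul_add_swap (A B C : Matrix ι ι R) :
    ((A * C - C * A) * B).trace + ((B * C - C * B) * A).trace = 0 := by
  simp only [sub_mul, trace_sub]
  rw [trace_mul_cycle C A B, trace_mul_cycle B C A, trace_mul_cycle C B A]
  ring

noncomputable def schlesingerRHS (s a : ℤ) : Matrix ι ι R :=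
  (∑ i ∈ Icc 1 (a - 1), (β i * β (s + a - i) - β (s + a - i) * β i)) +
    (a : R) • β (s + a)

noncomputable def traceRHSMul (s a b : ℤ) : R := (schlesingerRHS β s a * β b).trace

-- `L_s tr(B_a B_b)`, see `apply_trace_mul_eq_traceDeriv`.
noncomputable def traceDeriv (s a b : ℤ) : R := traceRHSMul β s a b + traceRHSMul β s b a

noncomputable def tracePotential (k N j : ℤ) : R :=
  traceDeriv β k j (N - j) - (β (k + j) * β (N - j)).trace + (β (k + N - j) * β j).trace
    - ((β j * β k - β k * β j) * β (N - j)).trace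

theorem schlesingerRHS_pred_succ (s a : ℤ) (ha : 1 ≤ a) :
    schlesingerRHS β (s - 1) (a + 1)
      = schlesingerRHS β s a + (β a * β s - β s * β a) + β (s + a) := by
  simp only [schlesingerRHS, add_sub_cancel_right, Icc_eq_insert_sub_one ha,
    sum_insert (by simp : a ∉ Icc 1 (a - 1)), show s - 1 + (a + 1) = s + a by ring]
  push_cast
  rw [add_smul, one_smul]
  abel

theorem traceRHSMul_pred_succ (s a b : ℤ) (ha : 1 ≤ a) :
    traceRHSMul β (s - 1) (a + 1) b = traceRHSMul β s a b
      + ((β a * β s - β s * β a) * β b).trace + (β (s + a) * β b).trace := by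
  simp only [traceRHSMul, schlesingerRHS_pred_succ β s a ha, add_mul, trace_add]

theorem two_mul_traceDeriv_sub (k N j : ℤ) (hj : 1 ≤ j) (hNj : 2 ≤ N - j) :
    2 * traceDeriv β k j (N - j) - traceDeriv β (k - 1) (j + 1) (N - j)
      - traceDeriv β (k + 1) j (N - 1 - j)
      = tracePotential β k N j - tracePotential β k N (j + 1) := by
  have h₁ := traceRHSMul_pred_succ β k j (N - j) hj
  have h₂ := traceRHSMul_pred_succ β k (N - j - 1) (j + 1) (by omega)
  have h₃ := traceRHSMul_pred_succ β (k + 1) (N - j - 1) j (by omega)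
  have h₄ := traceRHSMul_pred_succ β (k + 1) j (N - j - 1) hj
  have c₁ := trace_commutator_mul_add_swap (β (N - j - 1)) (β j) (β (k + 1))
  have c₂ := trace_commutator_mul_add_swap (β (N - j - 1)) (β (j + 1)) (β k)
  simp only [traceDeriv, tracePotential]
  linear_combination (norm := ring_nf) -h₁ - h₂ + h₃ + h₄ + c₁ - c₂

theorem tracePotential_sub (k m n : ℤ) :
    tracePotential β k (m + n) m - tracePotential β k (m + n) n
      = 2 * ((β k * (β m * β n - β n * β m)).trace
        - (β n * β (k + m)).trace + (β m * β (k + n)).trace) := by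
  simp only [tracePotential, traceDeriv, add_sub_cancel_left, add_sub_cancel_right,
    show k + (m + n) - m = k + n by ring, show k + (m + n) - n = k + m by ring,
    mul_sub, sub_mul, trace_sub, ← Matrix.mul_assoc]
  rw [← trace_mul_cycle (β k) (β n) (β m), ← trace_mul_cycle (β k) (β m) (β n),
    trace_mul_comm (β n) (β (k + m)), trace_mul_comm (β m) (β (k + n))]
  ring

theorem sum_two_mul_traceDeriv_sub (k : ℤ) {m n : ℤ} (hm : 1 ≤ m) (hmn : m < n) :
    ∑ j ∈ Icc m (n - 1), (2 * traceDeriv β k j (m + n - j)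
      - traceDeriv β (k - 1) (j + 1) (m + n - j) - traceDeriv β (k + 1) j (m + n - 1 - j))
      = 2 * ((β k * (β m * β n - β n * β m)).trace
        - (β n * β (k + m)).trace + (β m * β (k + n)).trace) := by
  have hstep : ∀ j ∈ Icc m (n - 1), 2 * traceDeriv β k j (m + n - j)
      - traceDeriv β (k - 1) (j + 1) (m + n - j) - traceDeriv β (k + 1) j (m + n - 1 - j)
      = tracePotential β k (m + n) j - tracePotential β k (m + n) (j + 1) := fun j hj => by
    rw [mem_Icc] at hj
    exact two_mul_traceDeriv_sub β k (m + n) j (by omega) (by omega)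
  rw [sum_congr rfl hstep, sum_Icc_sub_add_one _ hmn.le, tracePotential_sub]

theorem apply_trace_mul_eq_traceDeriv {X : Type*} (B : ℤ → X → Matrix ι ι R)
    (L : (X → Matrix ι ι R) → X → Matrix ι ι R) (ℓ : (X → R) → X → R) (s : ℤ)
    (hLeib : ∀ F G, L (F * G) = L F * G + F * L G)
    (hTr : ∀ F : X → Matrix ι ι R, ℓ (fun x => (F x).trace) = fun x => (L F x).trace)
    (hSch : ∀ a, 1 ≤ a → L (B a) = (∑ i ∈ Icc 1 (a - 1),
      (B i * B (s + a - i) - B (s + a - i) * B i)) + (a : R) • B (s + a))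
    {a b : ℤ} (ha : 1 ≤ a) (hb : 1 ≤ b) (x : X) :
    ℓ (fun x => (B a x * B b x).trace) x = traceDeriv (fun t => B t x) s a b := by
  change ℓ (fun x => ((B a * B b) x).trace) x = _
  rw [hTr, hLeib, hSch a ha, hSch b hb, traceDeriv, traceRHSMul, traceRHSMul,
    trace_mul_comm (schlesingerRHS _ s b)]
  simp only [schlesingerRHS, Pi.add_apply, Pi.mul_apply, Pi.sub_apply, Pi.smul_apply,
    Finset.sum_apply, trace_add]

end Schlesinger

open Schlesinger

theorem triple_trace_formula_general {X : Type*} (M : ℕ)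
    (B : ℤ → X → Matrix (Fin M) (Fin M) ℂ)
    (Lm : ℤ → (X → Matrix (Fin M) (Fin M) ℂ) →ₗ[ℂ] (X → Matrix (Fin M) (Fin M) ℂ))
    (Ls : ℤ → (X → ℂ) →ₗ[ℂ] (X → ℂ))
    (hLeib : ∀ m : ℤ, -1 ≤ m → ∀ F G : X → Matrix (Fin M) (Fin M) ℂ,
      Lm m (F * G) = Lm m F * G + F * Lm m G)
    (hTr : ∀ m : ℤ, -1 ≤ m → ∀ F : X → Matrix (Fin M) (Fin M) ℂ,
      Ls m (fun x => (F x).trace) = fun x => ((Lm m F) x).trace)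
    (hSch : ∀ m n : ℤ, -1 ≤ m → 1 ≤ n →
      Lm m (B n) = (∑ k ∈ Finset.Icc 1 (n - 1),
          (B k * B (m + n - k) - B (m + n - k) * B k)) + (n : ℂ) • B (m + n))
    (T : ℤ → ℤ → X → ℂ) (hT : ∀ a b, T a b = fun x => (B a x * B b x).trace) :
    ∀ k m n : ℤ, 1 ≤ k → k < m → m < n →
      (fun x => (B k x * (B m x * B n x - B n x * B m x)).trace) =
        (∑ j ∈ Finset.Icc m (n - 1),
          (Ls k (T j (m + n - j)) - (1/2 : ℂ) • Ls (k - 1) (T (j + 1) (m + n - j)) -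
            (1/2 : ℂ) • Ls (k + 1) (T j (m + n - 1 - j)))) +
        T n (k + m) - T m (k + n) := by
  intro k m n hk hkm hmn
  funext x
  set β : ℤ → Matrix (Fin M) (Fin M) ℂ := fun t => B t x
  have hL : ∀ s a b, -1 ≤ s → 1 ≤ a → 1 ≤ b → Ls s (T a b) x = traceDeriv β s a b :=
    fun s a b hs ha hb => by
      rw [hT]
      exact apply_trace_mul_eq_traceDeriv B (Lm s) (Ls s) s (hLeib s hs) (hTr s hs)
        (fun a ha => hSch s a hs ha) ha hb x
  have hsummand : ∀ j ∈ Icc m (n - 1),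
      (Ls k (T j (m + n - j)) - (1/2 : ℂ) • Ls (k - 1) (T (j + 1) (m + n - j)) -
        (1/2 : ℂ) • Ls (k + 1) (T j (m + n - 1 - j))) x
      = 1/2 * (2 * traceDeriv β k j (m + n - j) - traceDeriv β (k - 1) (j + 1) (m + n - j)
        - traceDeriv β (k + 1) j (m + n - 1 - j)) := fun j hj => by
    rw [mem_Icc] at hj
    simp only [Pi.sub_apply, Pi.smul_apply, smul_eq_mul]
    rw [hL k j _ (by omega) (by omega) (by omega),
      hL (k - 1) (j + 1) _ (by omega) (by omega) (by omega),
      hL (k + 1) j _ (by omega) (by omega) (by omega)]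
    ring
  rw [Pi.sub_apply, Pi.add_apply, Finset.sum_apply, sum_congr rfl hsummand, ← mul_sum,
    sum_two_mul_traceDeriv_sub β k (by omega) hmn]
  simp only [hT, β]
  ring

/-- Under the symmetrized Schlesinger system with `B_0 = 0`, for `1 ≤ k < m < n` the triple
trace satisfies
`tr(B_k [B_m, B_n]) = ∑_{j=m}^{n-1} ( L_k tr(B_j B_{m+n-j}) - (1/2) L_{k-1} tr(B_{j+1} B_{m+n-j})
  - (1/2) L_{k+1} tr(B_j B_{m+n-1-j}) ) + tr(B_n B_{k+m}) - tr(B_m B_{k+n})`.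
Here `T a b := tr(B_a B_b)` as a scalar function. -/
theorem triple_trace_formula {X : Type*} (M : ℕ)
    (B : ℤ → X → Matrix (Fin M) (Fin M) ℂ) (hB0 : B 0 = 0)
    (Lm : ℤ → (X → Matrix (Fin M) (Fin M) ℂ) →ₗ[ℂ] (X → Matrix (Fin M) (Fin M) ℂ))
    (Ls : ℤ → (X → ℂ) →ₗ[ℂ] (X → ℂ))
    (hLeib : ∀ m : ℤ, -1 ≤ m → ∀ F G : X → Matrix (Fin M) (Fin M) ℂ,
      Lm m (F * G) = Lm m F * G + F * Lm m G)
    (hTr : ∀ m : ℤ, -1 ≤ m → ∀ F : X → Matrix (Fin M) (Fin M) ℂ,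
      Ls m (fun x => (F x).trace) = fun x => ((Lm m F) x).trace)
    (hSch : ∀ m n : ℤ, -1 ≤ m → 1 ≤ n →
      Lm m (B n) = (∑ k ∈ Finset.Icc 1 (n - 1),
          (B k * B (m + n - k) - B (m + n - k) * B k)) + (n : ℂ) • B (m + n))
    (H : ℤ → X → ℂ)
    (hH : ∀ n, H n = fun x => -(1/4 : ℂ) * ∑ k ∈ Finset.Icc 0 n, (B k x * B (n - k) x).trace)
    (T : ℤ → ℤ → X → ℂ) (hT : ∀ a b, T a b = fun x => (B a x * B b x).trace) :
    ∀ k m n : ℤ, 1 ≤ k → k < m → m < n →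
      (fun x => (B k x * (B m x * B n x - B n x * B m x)).trace) =
        (∑ j ∈ Finset.Icc m (n - 1),
          (Ls k (T j (m + n - j)) - (1/2 : ℂ) • Ls (k - 1) (T (j + 1) (m + n - j)) -
            (1/2 : ℂ) • Ls (k + 1) (T j (m + n - 1 - j)))) +
        T n (k + m) - T m (k + n) :=
  triple_trace_formula_general M B Lm Ls hLeib hTr hSch T hT
end

section
/- Under the hypotheses of the symmetrized Schlesinger system with B_0 = 0 (so Ĥ_{-1} = Ĥ_0 = Ĥ_1 = 0), the triple trace in lowest degree satisfies: tr(B_1 [B_2, B_3]) = -2 L_2 L_2 Ĥ_2 - 4 L_3 Ĥ_3 + 10 L_4 Ĥ_2 + 4 Ĥ_6. -/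
/-!
With `B 0 = 0`, each of `Ĥ_2, Ĥ_3, Ĥ_6` and each derivative `L_m Ĥ_k` in the identity is a linear
combination of `tr(B_1 B_5)`, `tr(B_2 B_4)`, `tr(B_3²)` and `tr(B_1 [B_2, B_3])`: expand with the
Leibniz rule, the trace compatibility and the Schlesinger equations, and discard
`tr(B_1 [B_1, ·]) = 0` by cyclicity of the trace. In the stated combination all terms except
`tr(B_1 [B_2, B_3])` cancel.
-/

open Matrix

open Finset

section Schlesinger

variable {𝕜 R : Type*} [CommRing 𝕜] [Ring R] [Module 𝕜 R]

def IsSchlesinger (B : ℤ → R) (L : ℤ → R →ₗ[𝕜] R) : Prop :=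
  ∀ m n : ℤ, -1 ≤ m → 1 ≤ n →
    L m (B n) = (∑ k ∈ Icc 1 (n - 1), (B k * B (m + n - k) - B (m + n - k) * B k)) +
      (n : 𝕜) • B (m + n)

variable {B : ℤ → R} {L : ℤ → R →ₗ[𝕜] R}

theorem IsSchlesinger.apply_one (h : IsSchlesinger B L) {m : ℤ} (hm : -1 ≤ m) :
    L m (B 1) = B (m + 1) := by
  simpa using h m 1 hm le_rfl

theorem IsSchlesinger.apply_two (h : IsSchlesinger B L) {m : ℤ} (hm : -1 ≤ m) :
    L m (B 2) = (B 1 * B (m + 1) - B (m + 1) * B 1) + (2 : 𝕜) • B (m + 2) := by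
  have := h m 2 hm (by norm_num)
  rw [show Icc (1 : ℤ) (2 - 1) = {1} by decide, sum_singleton] at this
  convert this using 4 <;> push_cast <;> ring_nf

theorem IsSchlesinger.apply_three (h : IsSchlesinger B L) {m : ℤ} (hm : -1 ≤ m) :
    L m (B 3) = (B 1 * B (m + 2) - B (m + 2) * B 1) + (B 2 * B (m + 1) - B (m + 1) * B 2) +
      (3 : 𝕜) • B (m + 3) := by
  have := h m 3 hm (by norm_num)
  rw [show Icc (1 : ℤ) (3 - 1) = {1, 2} by decide, sum_pair (by norm_num)] at this
  convert this using 5 <;> push_cast <;> ring_nf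

end Schlesinger

section PointwiseTrace

variable {X n 𝕜 : Type*} [Fintype n] [CommRing 𝕜]

def pointwiseTrace : (X → Matrix n n 𝕜) →ₗ[𝕜] (X → 𝕜) :=
  (traceLinearMap n 𝕜 𝕜).compLeft X

@[simp]
theorem pointwiseTrace_apply (F : X → Matrix n n 𝕜) (x : X) :
    pointwiseTrace F x = (F x).trace :=
  rfl

theorem pointwiseTrace_mul_comm (F G : X → Matrix n n 𝕜) :
    pointwiseTrace (F * G) = pointwiseTrace (G * F) :=
  funext fun x => trace_mul_comm (F x) (G x)

theorem pointwiseTrace_mul_commutator_self (F G : X → Matrix n n 𝕜) :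
    pointwiseTrace (F * (F * G - G * F)) = 0 := by
  rw [mul_sub, map_sub, ← mul_assoc, pointwiseTrace_mul_comm (F * F), pointwiseTrace_mul_comm F,
    ← mul_assoc, sub_self]

theorem IsSchlesinger.apply_pointwiseTrace_one_mul_three [DecidableEq n]
    {B : ℤ → X → Matrix n n 𝕜} {Lm : ℤ → (X → Matrix n n 𝕜) →ₗ[𝕜] (X → Matrix n n 𝕜)}
    {Ls : (X → 𝕜) →ₗ[𝕜] (X → 𝕜)}
    (hS : IsSchlesinger B Lm) {m : ℤ} (hm : -1 ≤ m)
    (hL : ∀ F G, Ls (pointwiseTrace (F * G)) =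
      pointwiseTrace (Lm m F * G) + pointwiseTrace (F * Lm m G)) :
    Ls (pointwiseTrace (B 1 * B 3)) = pointwiseTrace (B (m + 1) * B 3) +
      pointwiseTrace (B 1 * (B 2 * B (m + 1) - B (m + 1) * B 2)) +
        (3 : 𝕜) • pointwiseTrace (B 1 * B (m + 3)) := by
  rw [hL, hS.apply_one hm, hS.apply_three hm]
  simp only [mul_add, mul_smul_comm, map_add, map_smul, pointwiseTrace_mul_commutator_self]
  module

end PointwiseTrace

section Hamiltonian

variable {X n 𝕜 : Type*} [Fintype n] [Field 𝕜]

/-- The paper's `Ĥ_k`. -/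
noncomputable def hamiltonian (B : ℤ → X → Matrix n n 𝕜) (k : ℤ) : X → 𝕜 :=
  (-(1 / 4) : 𝕜) • pointwiseTrace (∑ j ∈ Icc 0 k, B j * B (k - j))

variable {B : ℤ → X → Matrix n n 𝕜}

theorem hamiltonian_two (hB0 : B 0 = 0) :
    hamiltonian B 2 = (-(1 / 4) : 𝕜) • pointwiseTrace (B 1 * B 1) := by
  rw [hamiltonian, show Icc (0 : ℤ) 2 = {0, 1, 2} by decide]
  simp [hB0]

theorem hamiltonian_three [CharZero 𝕜] (hB0 : B 0 = 0) :
    hamiltonian B 3 = (-(1 / 2) : 𝕜) • pointwiseTrace (B 1 * B 2) := by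
  rw [hamiltonian, show Icc (0 : ℤ) 3 = {0, 1, 2, 3} by decide]
  simp [hB0, pointwiseTrace_mul_comm (B 2)]
  module

theorem hamiltonian_six [CharZero 𝕜] (hB0 : B 0 = 0) :
    hamiltonian B 6 = (-(1 / 2) : 𝕜) • pointwiseTrace (B 1 * B 5) +
      (-(1 / 2) : 𝕜) • pointwiseTrace (B 2 * B 4) +
        (-(1 / 4) : 𝕜) • pointwiseTrace (B 3 * B 3) := by
  rw [hamiltonian, show Icc (0 : ℤ) 6 = {0, 1, 2, 3, 4, 5, 6} by decide]
  simp [hB0, pointwiseTrace_mul_comm (B 4), pointwiseTrace_mul_comm (B 5)]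
  module

variable {Lm : ℤ → (X → Matrix n n 𝕜) →ₗ[𝕜] (X → Matrix n n 𝕜)} {Ls : (X → 𝕜) →ₗ[𝕜] (X → 𝕜)}

theorem IsSchlesinger.apply_hamiltonian_two [DecidableEq n] [CharZero 𝕜]
    (hS : IsSchlesinger B Lm) {m : ℤ} (hm : -1 ≤ m) (hL : ∀ F G, Ls (pointwiseTrace (F * G)) =
      pointwiseTrace (Lm m F * G) + pointwiseTrace (F * Lm m G)) (hB0 : B 0 = 0) :
    Ls (hamiltonian B 2) = (-(1 / 2) : 𝕜) • pointwiseTrace (B 1 * B (m + 1)) := by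
  rw [hamiltonian_two hB0, map_smul, hL, hS.apply_one hm, pointwiseTrace_mul_comm (B (m + 1))]
  module

theorem IsSchlesinger.apply_hamiltonian_three [DecidableEq n] [CharZero 𝕜]
    (hS : IsSchlesinger B Lm) {m : ℤ} (hm : -1 ≤ m) (hL : ∀ F G, Ls (pointwiseTrace (F * G)) =
      pointwiseTrace (Lm m F * G) + pointwiseTrace (F * Lm m G)) (hB0 : B 0 = 0) :
    Ls (hamiltonian B 3) = (-(1 / 2) : 𝕜) • pointwiseTrace (B 2 * B (m + 1)) -
      pointwiseTrace (B 1 * B (m + 2)) := by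
  rw [hamiltonian_three hB0, map_smul, hL, hS.apply_one hm, hS.apply_two hm]
  simp only [mul_add, mul_smul_comm, map_add, map_smul, pointwiseTrace_mul_commutator_self,
    pointwiseTrace_mul_comm (B (m + 1))]
  module

end Hamiltonian

theorem lowest_triple_trace_general {X : Type*} (M : ℕ)
    (B : ℤ → X → Matrix (Fin M) (Fin M) ℂ) (hB0 : B 0 = 0)
    (Lm : ℤ → (X → Matrix (Fin M) (Fin M) ℂ) →ₗ[ℂ] (X → Matrix (Fin M) (Fin M) ℂ))
    (Ls : ℤ → (X → ℂ) →ₗ[ℂ] (X → ℂ))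
    (hLeib : ∀ m : ℤ, -1 ≤ m → ∀ F G : X → Matrix (Fin M) (Fin M) ℂ,
      Lm m (F * G) = Lm m F * G + F * Lm m G)
    (hTr : ∀ m : ℤ, -1 ≤ m → ∀ F : X → Matrix (Fin M) (Fin M) ℂ,
      Ls m (fun x => (F x).trace) = fun x => ((Lm m F) x).trace)
    (hSch : ∀ m n : ℤ, -1 ≤ m → 1 ≤ n →
      Lm m (B n) = (∑ k ∈ Finset.Icc 1 (n - 1),
          (B k * B (m + n - k) - B (m + n - k) * B k)) + (n : ℂ) • B (m + n))
    (H : ℤ → X → ℂ)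
    (hH : ∀ n, H n = fun x => -(1/4 : ℂ) * ∑ k ∈ Finset.Icc 0 n, (B k x * B (n - k) x).trace) :
    (fun x => (B 1 x * (B 2 x * B 3 x - B 3 x * B 2 x)).trace) =
      (-2 : ℂ) • Ls 2 (Ls 2 (H 2)) - (4 : ℂ) • Ls 3 (H 3) + (10 : ℂ) • Ls 4 (H 2) +
        (4 : ℂ) • H 6 := by
  obtain rfl : H = hamiltonian B := funext fun k => by ext x; simp [hH, hamiltonian]
  have hS : IsSchlesinger B Lm := hSch
  have hLtr (m : ℤ) (hm : -1 ≤ m) (F G : X → Matrix (Fin M) (Fin M) ℂ) :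
      Ls m (pointwiseTrace (F * G)) =
        pointwiseTrace (Lm m F * G) + pointwiseTrace (F * Lm m G) := by
    rw [← map_add, ← hLeib m hm]
    exact hTr m hm _
  have hL2H2 : Ls 2 (hamiltonian B 2) = (-(1 / 2) : ℂ) • pointwiseTrace (B 1 * B 3) := by
    simpa using hS.apply_hamiltonian_two (m := 2) (by norm_num) (hLtr 2 (by norm_num)) hB0
  have hL2B1B3 : Ls 2 (pointwiseTrace (B 1 * B 3)) = pointwiseTrace (B 3 * B 3) +
      pointwiseTrace (B 1 * (B 2 * B 3 - B 3 * B 2)) + (3 : ℂ) • pointwiseTrace (B 1 * B 5) := by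
    simpa using hS.apply_pointwiseTrace_one_mul_three (m := 2) (by norm_num) (hLtr 2 (by norm_num))
  have hL3H3 : Ls 3 (hamiltonian B 3) =
      (-(1 / 2) : ℂ) • pointwiseTrace (B 2 * B 4) - pointwiseTrace (B 1 * B 5) := by
    simpa using hS.apply_hamiltonian_three (m := 3) (by norm_num) (hLtr 3 (by norm_num)) hB0
  have hL4H2 : Ls 4 (hamiltonian B 2) = (-(1 / 2) : ℂ) • pointwiseTrace (B 1 * B 5) := by
    simpa using hS.apply_hamiltonian_two (m := 4) (by norm_num) (hLtr 4 (by norm_num)) hB0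
  change pointwiseTrace (B 1 * (B 2 * B 3 - B 3 * B 2)) = _
  rw [hL2H2, map_smul, hL2B1B3, hL3H3, hL4H2, hamiltonian_six hB0]
  module

/-- Under the symmetrized Schlesinger system with `B_0 = 0` (so `Ĥ_{-1} = Ĥ_0 = Ĥ_1 = 0`),
the lowest triple trace satisfies
`tr(B_1 [B_2, B_3]) = -2 L_2 L_2 Ĥ_2 - 4 L_3 Ĥ_3 + 10 L_4 Ĥ_2 + 4 Ĥ_6`. -/
theorem lowest_triple_trace {X : Type*} (M : ℕ)
    (B : ℤ → X → Matrix (Fin M) (Fin M) ℂ) (hB0 : B 0 = 0)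
    (Lm : ℤ → (X → Matrix (Fin M) (Fin M) ℂ) →ₗ[ℂ] (X → Matrix (Fin M) (Fin M) ℂ))
    (Ls : ℤ → (X → ℂ) →ₗ[ℂ] (X → ℂ))
    (hLeib : ∀ m : ℤ, -1 ≤ m → ∀ F G : X → Matrix (Fin M) (Fin M) ℂ,
      Lm m (F * G) = Lm m F * G + F * Lm m G)
    (hTr : ∀ m : ℤ, -1 ≤ m → ∀ F : X → Matrix (Fin M) (Fin M) ℂ,
      Ls m (fun x => (F x).trace) = fun x => ((Lm m F) x).trace)
    (hSch : ∀ m n : ℤ, -1 ≤ m → 1 ≤ n →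
      Lm m (B n) = (∑ k ∈ Finset.Icc 1 (n - 1),
          (B k * B (m + n - k) - B (m + n - k) * B k)) + (n : ℂ) • B (m + n))
    (H : ℤ → X → ℂ)
    (hH : ∀ n, H n = fun x => -(1/4 : ℂ) * ∑ k ∈ Finset.Icc 0 n, (B k x * B (n - k) x).trace)
    (hVir : ∀ m n : ℤ, -1 ≤ m → -1 ≤ n → ∀ g : X → ℂ,
      Ls m (Ls n g) - Ls n (Ls m g) = ((n - m : ℤ) : ℂ) • Ls (m + n) g) :
    (fun x => (B 1 x * (B 2 x * B 3 x - B 3 x * B 2 x)).trace) =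
      (-2 : ℂ) • Ls 2 (Ls 2 (H 2)) - (4 : ℂ) • Ls 3 (H 3) + (10 : ℂ) • Ls 4 (H 2) +
        (4 : ℂ) • H 6 :=
  lowest_triple_trace_general M B hB0 Lm Ls hLeib hTr hSch H hH
end

section
/- For the Schlesinger system in dimension M with N poles, the Hamiltonians H_j := (1/2) Σ_{k≠j} tr(A_j A_k)/(λ_k - λ_j) satisfy Σ_j λ_j^{m+1} H_j = Ĥ_m + (1/4)(m+1) Σ_j λ_j^m C_j, where Ĥ_m := -(1/4) Σ_{k=0}^m tr(B_k B_{m-k}), B_k := Σ_j λ_j^k A_j, and C_j := tr(A_j^2), provided Σ_j A_j = 0. -/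
/-! Writing `t_jk = tr(A_j A_k)`, which is symmetric in `j, k`, the left side is half of an
off-diagonal sum; pairing the `(j, k)` and `(k, j)` terms gives
`λ_j^{m+1}/(λ_k - λ_j) + λ_k^{m+1}/(λ_j - λ_k) = -∑_{r ≤ m} λ_j^r λ_k^{m-r}`.
On the other side, `∑_{r ≤ m} tr(B_r B_{m-r}) = ∑_{j,k} ∑_{r ≤ m} λ_j^r λ_k^{m-r} t_jk`, whose
diagonal part is `(m+1) ∑_j λ_j^m C_j`; what is left is the same off-diagonal sum. -/

open Finset Matrix

theorem Finset.sum_sum_erase_comm {ι α : Type*} [Fintype ι] [DecidableEq ι] [AddCommMonoid α]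
    (g : ι → ι → α) :
    ∑ j, ∑ k ∈ univ.erase j, g j k = ∑ j, ∑ k ∈ univ.erase j, g k j := by
  simp_rw [← filter_ne', sum_filter]
  rw [sum_comm]
  exact sum_congr rfl fun j _ => sum_congr rfl fun k _ => by simp only [ne_comm]

theorem pow_succ_div_sub_add_pow_succ_div_sub {K : Type*} [Field K] {a b : K} (h : a ≠ b)
    (m : ℕ) :
    a ^ (m + 1) / (b - a) + b ^ (m + 1) / (a - b) = -∑ r ∈ range (m + 1), a ^ r * b ^ (m - r) := by
  have hgeom := geom_sum₂_mul a b (m + 1)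
  simp only [Nat.add_sub_cancel] at hgeom
  have hba : b - a ≠ 0 := sub_ne_zero.mpr h.symm
  have hab : a - b ≠ 0 := sub_ne_zero.mpr h
  field_simp
  linear_combination (b - a) * hgeom

theorem Matrix.trace_sum_smul_mul_sum_smul {ι n R : Type*} [Fintype ι] [Fintype n]
    [CommSemiring R] (c d : ι → R) (A : ι → Matrix n n R) :
    ((∑ j, c j • A j) * ∑ k, d k • A k).trace = ∑ j, ∑ k, c j * d k * (A j * A k).trace := by
  simp only [sum_mul_sum, trace_sum, Matrix.smul_mul, Matrix.mul_smul, smul_smul, trace_smul,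
    smul_eq_mul]
  exact sum_congr rfl fun j _ => sum_congr rfl fun k _ => by ring

theorem Matrix.sum_range_trace_pow_smul_mul_pow_smul {ι n R : Type*} [Fintype ι]
    [DecidableEq ι] [Fintype n] [CommRing R] (lam : ι → R) (A : ι → Matrix n n R) (m : ℕ) :
    ∑ r ∈ range (m + 1), ((∑ j, lam j ^ r • A j) * ∑ j, lam j ^ (m - r) • A j).trace =
      (m + 1) * ∑ j, lam j ^ m * (A j * A j).trace +
        ∑ j, ∑ k ∈ univ.erase j,
          (∑ r ∈ range (m + 1), lam j ^ r * lam k ^ (m - r)) * (A j * A k).trace := by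
  have hdiag : ∀ r ∈ range (m + 1), ∀ j, lam j ^ r * lam j ^ (m - r) = lam j ^ m :=
    fun r hr j => by
    rw [← pow_add, Nat.add_sub_cancel' (Nat.lt_succ_iff.mp (mem_range.mp hr))]
  calc
    _ = ∑ r ∈ range (m + 1), (∑ j, lam j ^ m * (A j * A j).trace +
          ∑ j, ∑ k ∈ univ.erase j, lam j ^ r * lam k ^ (m - r) * (A j * A k).trace) := by
      refine sum_congr rfl fun r hr => ?_
      rw [trace_sum_smul_mul_sum_smul, ← sum_add_distrib]
      refine sum_congr rfl fun j _ => ?_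
      rw [← add_sum_erase _ _ (mem_univ j), hdiag r hr j]
    _ = _ := by
      rw [sum_add_distrib, sum_const, card_range, nsmul_eq_mul, sum_comm]
      simp_rw [sum_mul]
      rw [sum_congr rfl fun j _ => sum_comm]
      push_cast
      rfl

theorem two_mul_sum_sum_erase_pow_mul_div_sub {ι K : Type*} [Fintype ι] [DecidableEq ι]
    [Field K] (lam : ι → K) (hlam : ∀ i j : ι, i ≠ j → lam i ≠ lam j) (t : ι → ι → K)
    (ht : ∀ j k, t j k = t k j) (m : ℕ) :
    2 * ∑ j, ∑ k ∈ univ.erase j, lam j ^ (m + 1) * (t j k / (lam k - lam j)) =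
      -∑ j, ∑ k ∈ univ.erase j, (∑ r ∈ range (m + 1), lam j ^ r * lam k ^ (m - r)) * t j k := by
  rw [two_mul]
  nth_rewrite 2 [sum_sum_erase_comm]
  rw [← sum_add_distrib, ← sum_neg_distrib]
  refine sum_congr rfl fun j _ => ?_
  rw [← sum_add_distrib, ← sum_neg_distrib]
  refine sum_congr rfl fun k hk => ?_
  rw [ht k j]
  linear_combination t j k *
    pow_succ_div_sub_add_pow_succ_div_sub (hlam j k (ne_of_mem_erase hk).symm) m

theorem symmetrized_hamiltonians_general (N M : ℕ) (lam : Fin N → ℂ)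
    (hdist : ∀ i j : Fin N, i ≠ j → lam i ≠ lam j)
    (A : Fin N → Matrix (Fin M) (Fin M) ℂ) (m : ℕ) :
    ∑ j, lam j ^ (m + 1) *
        ((1/2 : ℂ) * ∑ k ∈ Finset.univ.erase j, (A j * A k).trace / (lam k - lam j)) =
      -(1/4 : ℂ) * (∑ k ∈ Finset.range (m + 1),
          ((∑ j, lam j ^ k • A j) * (∑ j, lam j ^ (m - k) • A j)).trace) +
        (1/4 : ℂ) * (m + 1 : ℂ) * ∑ j, lam j ^ m * (A j * A j).trace := by
  have hpair := two_mul_sum_sum_erase_pow_mul_div_sub lam hdist (fun j k => (A j * A k).trace)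
    (fun j k => trace_mul_comm (A j) (A k)) m
  have hhalf : ∑ j, lam j ^ (m + 1) *
        ((1/2 : ℂ) * ∑ k ∈ univ.erase j, (A j * A k).trace / (lam k - lam j)) =
      (1/2 : ℂ) * ∑ j, ∑ k ∈ univ.erase j,
        lam j ^ (m + 1) * ((A j * A k).trace / (lam k - lam j)) := by
    simp only [mul_sum]
    exact sum_congr rfl fun j _ => sum_congr rfl fun k _ => by ring
  rw [hhalf, sum_range_trace_pow_smul_mul_pow_smul]
  linear_combination (1/4 : ℂ) * hpair

/-- For the Schlesinger system in dimension `M` with `N` poles, the Hamiltonians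
`H_j := (1/2) ∑_{k≠j} tr(A_j A_k)/(λ_k - λ_j)` satisfy
`∑_j λ_j^{m+1} H_j = Ĥ_m + (1/4)(m+1) ∑_j λ_j^m C_j`, where
`Ĥ_m := -(1/4) ∑_{k=0}^m tr(B_k B_{m-k})`, `B_k := ∑_j λ_j^k A_j`, `C_j := tr(A_j²)`,
provided `∑_j A_j = 0`. -/
theorem symmetrized_hamiltonians (N M : ℕ) (lam : Fin N → ℂ)
    (hdist : ∀ i j : Fin N, i ≠ j → lam i ≠ lam j)
    (A : Fin N → Matrix (Fin M) (Fin M) ℂ) (hsum : ∑ j, A j = 0) (m : ℕ) :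
    ∑ j, lam j ^ (m + 1) *
        ((1/2 : ℂ) * ∑ k ∈ Finset.univ.erase j, (A j * A k).trace / (lam k - lam j)) =
      -(1/4 : ℂ) * (∑ k ∈ Finset.range (m + 1),
          ((∑ j, lam j ^ k • A j) * (∑ j, lam j ^ (m - k) • A j)).trace) +
        (1/4 : ℂ) * (m + 1 : ℂ) * ∑ j, lam j ^ m * (A j * A j).trace :=
  symmetrized_hamiltonians_general N M lam hdist A m
end
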